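/- There is a constant K such that for every odd u ∈ l²(ℤ;ℂ) (i.e. u(-x) = -u(x) for all x) with ‖u‖_{l²_1} ≤ 1, and every λ ∈ ℂ with Im λ ≠ 0, the resolvent satisfies ‖(-Δ_d - λ)^{-1} u‖_{l²_{-1}} ≤ K; i.e. the weighted resolvent bound sup_{Im λ ≠ 0} ‖(-Δ_d - λ)^{-1}‖_{l²_1 → l²_{-1}} < ∞ holds uniformly on odd functions. -/

import Mathlib

noncomputable section

open scoped BigOperators ENNReal
open MeasureTheory Complex Filter

/-! ## Sequence spaces and norms -/

/-- Square-summable complex sequences `ℓ²(ℤ;ℂ)`. -/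
abbrev L2 := lp (fun _ : ℤ => ℂ) 2
/-- Square-summable real sequences `ℓ²(ℤ;ℝ)`. -/
abbrev L2R := lp (fun _ : ℤ => ℝ) 2
/-- Bounded real sequences `ℓ^∞(ℕ₀;ℝ)`. -/
abbrev LinfN := lp (fun _ : ℕ => ℝ) ⊤

/-- Discrete Laplacian on raw complex sequences. -/
def lapC (u : ℤ → ℂ) : ℤ → ℂ := fun x => u (x + 1) - 2 * u x + u (x - 1)

/-- Discrete Laplacian on raw real sequences. -/
def lapR (u : ℤ → ℝ) : ℤ → ℝ := fun x => u (x + 1) - 2 * u x + u (x - 1)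

/-- Exponential weight `e^{a|x|}`. -/
def wt (a : ℝ) (x : ℤ) : ℝ := Real.exp (a * |(x : ℝ)|)

/-- `ℝ≥0∞`-valued weighted `ℓ²` norm `‖u‖_{l²_a} = ‖e^{a|·|}u‖_{l²}`. -/
def el2w (a : ℝ) (u : ℤ → ℂ) : ℝ≥0∞ :=
  (∑' x : ℤ, ((‖u x‖₊ : ℝ≥0∞) * ENNReal.ofReal (wt a x)) ^ (2 : ℕ)) ^ ((1 : ℝ) / 2)

/-- `ℝ≥0∞`-valued `ℓ²` norm. -/
def el2 (u : ℤ → ℂ) : ℝ≥0∞ := el2w 0 u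

/-- `ℝ≥0∞`-valued `ℓ¹` norm. -/
def el1 (u : ℤ → ℂ) : ℝ≥0∞ := ∑' x : ℤ, (‖u x‖₊ : ℝ≥0∞)

/-- `ℝ≥0∞`-valued `ℓ^∞` norm. -/
def elinf (u : ℤ → ℂ) : ℝ≥0∞ := ⨆ x : ℤ, (‖u x‖₊ : ℝ≥0∞)

/-- `L^q` norm in time over the set `I` of an `ℝ≥0∞`-valued function. -/
def LqT (q : ℝ) (I : Set ℝ) (F : ℝ → ℝ≥0∞) : ℝ≥0∞ := (∫⁻ t in I, F t ^ q) ^ (1 / q)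

/-- `L^∞` norm in time over the set `I` of an `ℝ≥0∞`-valued function. -/
def LinfT (I : Set ℝ) (F : ℝ → ℝ≥0∞) : ℝ≥0∞ := essSup F (volume.restrict I)

/-- The `Strichartz` norm `L^∞(I,l²) ∩ L⁶(I,l^∞)` of a time-dependent sequence. -/
def StzT (I : Set ℝ) (F : ℝ → ℤ → ℂ) : ℝ≥0∞ :=
  LinfT I (fun t => el2 (F t)) + LqT 6 I (fun t => elinf (F t))

/-- The `L¹ ∩ L^∞` norm in time of a scalar function. -/
def L1LinfT (I : Set ℝ) (g : ℝ → ℝ) : ℝ≥0∞ :=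
  LqT 1 I (fun t => (‖g t‖₊ : ℝ≥0∞)) + LinfT I (fun t => (‖g t‖₊ : ℝ≥0∞))

/-! ## The discrete Laplacian and its unitary group -/

lemma memℓp_translate (k : ℤ) (u : L2) : Memℓp (fun x : ℤ => u (x + k)) 2 := by
  apply memℓp_gen
  have hs : Summable fun x : ℤ => ‖u x‖ ^ (2 : ℝ≥0∞).toReal :=
    (memℓp_gen_iff (by norm_num)).1 (lp.memℓp u)
  exact ((Equiv.addRight k).summable_iff
    (f := fun x : ℤ => ‖u x‖ ^ (2 : ℝ≥0∞).toReal)).2 hs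

lemma norm_translate (k : ℤ) (u : L2) :
    ‖(⟨fun x : ℤ => u (x + k), memℓp_translate k u⟩ : L2)‖ = ‖u‖ := by
  rw [lp.norm_eq_tsum_rpow (by norm_num), lp.norm_eq_tsum_rpow (by norm_num)]
  congr 1
  exact (Equiv.addRight k).tsum_eq (f := fun x : ℤ => ‖u x‖ ^ (2 : ℝ≥0∞).toReal)

/-- Translation `u ↦ u(· + k)` as a linear map on `ℓ²(ℤ;ℂ)`. -/
def translateLM (k : ℤ) : L2 →ₗ[ℂ] L2 where
  toFun u := ⟨fun x => u (x + k), memℓp_translate k u⟩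
  map_add' u v := by ext x; simp [lp.coeFn_add]; rfl
  map_smul' c u := by ext x; simp [lp.coeFn_smul]

/-- Translation as a continuous linear map on `ℓ²(ℤ;ℂ)`. -/
def translateCLM (k : ℤ) : L2 →L[ℂ] L2 :=
  LinearMap.mkContinuous (translateLM k) 1 (by
    intro u; rw [one_mul]; exact le_of_eq (norm_translate k u))

/-- The discrete Laplacian `(Δ_d u)(x) = u(x+1) - 2u(x) + u(x-1)` as a bounded operator
on `ℓ²(ℤ;ℂ)`. -/
def DeltaD : L2 →L[ℂ] L2 :=
  translateCLM 1 + translateCLM (-1) - 2 • ContinuousLinearMap.id ℂ L2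

lemma DeltaD_apply (u : L2) (x : ℤ) :
    DeltaD u x = u (x + 1) - 2 * u x + u (x - 1) := by
  simp [DeltaD, translateCLM, translateLM, LinearMap.mkContinuous,
    lp.coeFn_add, lp.coeFn_sub, lp.coeFn_smul, sub_eq_add_neg]
  change u (x + 1) + u (x + -1) + -(2 * u x) = _
  ring

/-- The Kronecker delta at `0` as an element of `ℓ²(ℤ;ℂ)`. -/
def e0C : L2 := lp.single 2 (0 : ℤ) (1 : ℂ)

lemma norm_e0C : ‖e0C‖ = 1 := by
  have := lp.norm_single (p := 2) (E := fun _ : ℤ => ℂ) (by norm_num)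
    0 (1 : ℂ)
  simpa [e0C] using this

/-- The projection `P₀⊥ u = u - (u,δ₀)δ₀` as a bounded operator on `ℓ²(ℤ;ℂ)`. -/
def P0perp : L2 →L[ℂ] L2 :=
  LinearMap.mkContinuous
    { toFun := fun u => u - (u 0) • e0C
      map_add' := fun u v => by
        have h : (↑(u + v) : ∀ _ : ℤ, ℂ) 0 = u 0 + v 0 := by
          rw [lp.coeFn_add]; rfl
        show (u + v) - ((u + v : L2) 0) • e0C = (u - (u 0) • e0C) + (v - (v 0) • e0C)
        rw [h, add_smul]; abel
      map_smul' := fun c u => by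
        have h : (↑(c • u) : ∀ _ : ℤ, ℂ) 0 = c * u 0 := by
          rw [lp.coeFn_smul]; rfl
        show (c • u) - ((c • u : L2) 0) • e0C = (RingHom.id ℂ) c • (u - (u 0) • e0C)
        rw [h, RingHom.id_apply, mul_smul, ← smul_sub] }
    2 (by
      intro u
      have h2 : ‖u 0‖ ≤ ‖u‖ := lp.norm_apply_le_norm (by norm_num) u 0
      calc ‖u - (u 0) • e0C‖ ≤ ‖u‖ + ‖(u 0) • e0C‖ := norm_sub_le _ _
        _ = ‖u‖ + ‖u 0‖ * ‖e0C‖ := by rw [norm_smul]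
        _ ≤ 2 * ‖u‖ := by rw [norm_e0C]; linarith)

lemma P0perp_apply (u : L2) (x : ℤ) :
    P0perp u x = if x = 0 then 0 else u x := by
  have h : P0perp u = u - (u 0) • e0C := rfl
  rw [h, lp.coeFn_sub, lp.coeFn_smul]
  by_cases hx : x = 0 <;>
    simp [hx, e0C, lp.single_apply, Pi.sub_apply, Pi.smul_apply]

/-- `Δ₀ = P₀⊥ Δ_d P₀⊥`, the discrete Laplacian restricted to `P₀⊥ ℓ²`. -/
def Delta0 : L2 →L[ℂ] L2 := P0perp.comp (DeltaD.comp P0perp)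

/-- The unitary group `e^{itΔ_d}`. -/
def Ud (t : ℝ) : L2 →L[ℂ] L2 := NormedSpace.exp ((Complex.I * t) • DeltaD)

/-- The unitary group `e^{itΔ₀}`. -/
def U0 (t : ℝ) : L2 →L[ℂ] L2 := NormedSpace.exp ((Complex.I * t) • Delta0)

/-- Domination criterion for membership in `ℓ²`. -/
lemma memℓp_of_le (u : L2) (f : ℤ → ℂ) (h : ∀ x, ‖f x‖ ≤ ‖u x‖) : Memℓp f 2 := by
  apply memℓp_gen
  have hs : Summable fun x : ℤ => ‖u x‖ ^ (2 : ℝ≥0∞).toReal :=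
    (memℓp_gen_iff (by norm_num)).1 (lp.memℓp u)
  refine hs.of_nonneg_of_le (fun x => ?_) (fun x => ?_)
  · positivity
  · exact Real.rpow_le_rpow (norm_nonneg _) (h x) (by norm_num)

/-- The restriction `P₊` to `{x ≥ 1}`. -/
def Pplus (u : L2) : L2 :=
  ⟨fun x => if 1 ≤ x then u x else 0,
    memℓp_of_le u _ (fun x => by by_cases h : 1 ≤ x <;> simp [h])⟩

/-- The restriction `P₋` to `{x ≤ -1}`. -/
def Pminus (u : L2) : L2 :=
  ⟨fun x => if x ≤ -1 then u x else 0,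
    memℓp_of_le u _ (fun x => by by_cases h : x ≤ -1 <;> simp [h])⟩

/-- Duhamel term `∫₀ᵗ e^{i(t-s)Δ₀} P₀⊥ f(s) ds`. -/
def duhamel (f : ℝ → L2) (t : ℝ) : L2 := ∫ s in (0 : ℝ)..t, U0 (t - s) (P0perp (f s))

/-! ## Soliton families -/

/-- The Kronecker delta at `0` in `ℓ²(ℤ;ℝ)`. -/
def e0R : L2R := lp.single 2 (0 : ℤ) (1 : ℝ)

/-- `P₀⊥` on real `ℓ²`. -/
def P0R (u : L2R) : L2R := u - (u 0) • e0R

/-- A family of solitons `φ_ω`, `ω ∈ (ω₀,∞)`, as in Proposition 1.2 of the paper.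
The data is recorded through the weighted sequences `Φ ω = e^{10|·|} φ_ω ∈ ℓ²(ℤ;ℝ)`
(so that `φ_ω = e^{-10|·|} Φ ω`, the map `ω ↦ φ_ω` is twice continuously differentiable
into `l²_{10}` iff `ω ↦ Φ ω` is so into `ℓ²`, and `l²_{10}`-norm statements about `φ_ω`
are plain `ℓ²`-norm statements about `Φ ω`), together with its first and second
derivatives in `ω`.  The fields state: `ω ↦ φ_ω` is `C²` from `(ω₀,∞)` to `l²_{10}`;
`φ_ω` solves `0 = -Δ_d φ_ω + ω φ_ω - |φ_ω|⁶ φ_ω`; and the two weighted estimates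
`∑_{j=0}^{2} ω^j ‖∂_ω^j φ_ω - ∂_ω^j(ω^{1/6} δ₀)‖_{l²_{10}} ≤ C ω^{-5/6}` and
`∑_{j=0}^{2} ω^j ‖P₀⊥ ∂_ω^j φ_ω‖_{l²_{10}} ≤ C ω^{-5/6}` hold (note
`∂_ω(ω^{1/6}δ₀) = (1/6)ω^{-5/6}δ₀` and `∂_ω²(ω^{1/6}δ₀) = -(5/36)ω^{-11/6}δ₀`). -/
structure SolitonFamily (ω₀ C : ℝ) : Type where
  Φ : ℝ → L2R
  Φ' : ℝ → L2R
  Φ'' : ℝ → L2R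
  hasDeriv1 : ∀ ω ∈ Set.Ioi ω₀, HasDerivAt Φ (Φ' ω) ω
  hasDeriv2 : ∀ ω ∈ Set.Ioi ω₀, HasDerivAt Φ' (Φ'' ω) ω
  contDeriv2 : ContinuousOn Φ'' (Set.Ioi ω₀)
  eqn : ∀ ω ∈ Set.Ioi ω₀, ∀ x : ℤ,
    0 = -(lapR (fun y => wt (-10) y * Φ ω y) x) + ω * (wt (-10) x * Φ ω x)
        - |wt (-10) x * Φ ω x| ^ 6 * (wt (-10) x * Φ ω x)
  approx : ∀ ω ∈ Set.Ioi ω₀,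
      ‖Φ ω - (ω ^ ((1 : ℝ) / 6)) • e0R‖
    + ω * ‖Φ' ω - ((1 / 6 : ℝ) * ω ^ (-(5 : ℝ) / 6)) • e0R‖
    + ω ^ 2 * ‖Φ'' ω - ((-5 / 36 : ℝ) * ω ^ (-(11 : ℝ) / 6)) • e0R‖
      ≤ C * ω ^ (-(5 : ℝ) / 6)
  perp : ∀ ω ∈ Set.Ioi ω₀,
      ‖P0R (Φ ω)‖ + ω * ‖P0R (Φ' ω)‖ + ω ^ 2 * ‖P0R (Φ'' ω)‖ ≤ C * ω ^ (-(5 : ℝ) / 6)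

namespace SolitonFamily
variable {ω₀ C : ℝ} (sf : SolitonFamily ω₀ C)

/-- The soliton `φ_ω` as a raw real sequence. -/
def phiF (ω : ℝ) : ℤ → ℝ := fun x => wt (-10) x * sf.Φ ω x
/-- `∂_ω φ_ω` as a raw real sequence. -/
def dphiF (ω : ℝ) : ℤ → ℝ := fun x => wt (-10) x * sf.Φ' ω x
/-- `∂²_ω φ_ω` as a raw real sequence. -/
def d2phiF (ω : ℝ) : ℤ → ℝ := fun x => wt (-10) x * sf.Φ'' ω x
/-- `φ[θ,ω] = e^{iθ} φ_ω`. -/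
def phiC (θ ω : ℝ) : ℤ → ℂ := fun x => Complex.exp (Complex.I * θ) * (sf.phiF ω x : ℂ)
/-- `∂_θ φ[θ,ω] = i e^{iθ} φ_ω`. -/
def dthphiC (θ ω : ℝ) : ℤ → ℂ :=
  fun x => Complex.I * Complex.exp (Complex.I * θ) * (sf.phiF ω x : ℂ)
/-- `∂_ω φ[θ,ω] = e^{iθ} ∂_ω φ_ω`. -/
def dOmphiC (θ ω : ℝ) : ℤ → ℂ := fun x => Complex.exp (Complex.I * θ) * (sf.dphiF ω x : ℂ)

end SolitonFamily

/-- The real inner product `⟨u,v⟩ = Re ∑_x u(x) conj(v(x))`. -/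
def rip (u v : ℤ → ℂ) : ℝ := ∑' x : ℤ, (u x * (starRingEnd ℂ) (v x)).re

/-- The symplectic form `Ω(u,v) = ⟨iu, v⟩`. -/
def Om (u v : ℤ → ℂ) : ℝ := rip (fun x => Complex.I * u x) v

namespace SolitonFamily
variable {ω₀ C : ℝ} (sf : SolitonFamily ω₀ C)

/-- `H_c[θ,ω] = {u ∈ ℓ² : Ω(u, ∂_θφ[θ,ω]) = Ω(u, ∂_ωφ[θ,ω]) = 0}`. -/
def Hc (θ ω : ℝ) : Set L2 :=
  {v : L2 | Om (fun x => v x) (sf.dthphiC θ ω) = 0 ∧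
            Om (fun x => v x) (sf.dOmphiC θ ω) = 0}

/-- The tube `T_{ω*}(r) = {u : inf_θ ‖u - φ[θ,ω*]‖_{l²} < r}` around the soliton orbit. -/
def Tset (ωs r : ℝ) : Set L2 :=
  {u : L2 | (⨅ θ : ℝ, el2 (fun x => u x - sf.phiC θ ωs x)) < ENNReal.ofReal r}

end SolitonFamily

/-- `u` is a `C¹` solution of DNLS `i ∂_t u = -Δ_d u - |u|⁶ u` on the time set `S`,
with derivative `u'`. -/
def IsDNLS (u u' : ℝ → L2) (S : Set ℝ) : Prop :=
  ContinuousOn u' S ∧ ∀ t ∈ S, HasDerivWithinAt u (u' t) S t ∧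
    ∀ x : ℤ, Complex.I * (u' t) x
      = -(lapC (fun y => (u t) y) x) - (‖(u t) x‖ : ℂ) ^ 6 * (u t) x

/-- The modulation remainder `ξ(t) = u(t) - φ[θ(t),ω(t)]` as a raw sequence. -/
def xiF {ω₀ C : ℝ} (sf : SolitonFamily ω₀ C) (u : ℝ → L2) (θ ω : ℝ → ℝ) (t : ℝ) :
    ℤ → ℂ := fun x => u t x - sf.phiC (θ t) (ω t) x

/-- `η(t) = P₀⊥ ξ(t)` as a raw sequence. -/
def etaF {ω₀ C : ℝ} (sf : SolitonFamily ω₀ C) (u : ℝ → L2) (θ ω : ℝ → ℝ) (t : ℝ) :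
    ℤ → ℂ := fun x => if x = 0 then 0 else xiF sf u θ ω t x

/-- The scalar coefficient appearing in the inverse `Q[θ,ω]` of `P₀⊥|_{H_c[θ,ω]}`. -/
def Qcoef {ω₀ C : ℝ} (sf : SolitonFamily ω₀ C) (θ ω : ℝ) (u : L2) : ℂ :=
  Complex.exp (Complex.I * θ) *
    (((-(sf.phiF ω 0)⁻¹ * Om (fun x => u x) (sf.dthphiC θ ω) : ℝ) : ℂ)
      + Complex.I * (((sf.dphiF ω 0)⁻¹ * Om (fun x => u x) (sf.dOmphiC θ ω) : ℝ) : ℂ))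

/-- The map `Q[θ,ω] u = u + e^{iθ}(-φ_ω(0)⁻¹ Ω(u,∂_θφ) + i (∂_ωφ_ω(0))⁻¹ Ω(u,∂_ωφ)) δ₀`. -/
def Qmap {ω₀ C : ℝ} (sf : SolitonFamily ω₀ C) (θ ω : ℝ) (u : L2) : L2 :=
  u + lp.single 2 (0 : ℤ) (Qcoef sf θ ω u)

/-- The (ℝ-linear) linearized operator
`H[θ,ω]u = -Δ_d u - 4|φ[θ,ω]|⁶ u - 3|φ[θ,ω]|⁴ φ[θ,ω]² conj(u)`. -/
def Hop {ω₀ C : ℝ} (sf : SolitonFamily ω₀ C) (θ ω : ℝ) (u : ℤ → ℂ) : ℤ → ℂ :=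
  fun x => -(lapC u x) - 4 * (‖sf.phiC θ ω x‖ : ℂ) ^ 6 * u x
    - 3 * (‖sf.phiC θ ω x‖ : ℂ) ^ 4 * (sf.phiC θ ω x) ^ 2 * (starRingEnd ℂ) (u x)

/-- The soliton of the appendix (anti-continuous limit) construction:
`φ_ω = ω^{1/6}((1 + ω⁻¹ψ₀(ω⁻¹))δ₀ + ∑_{j≥1} ω^{-j} ψ_j(ω⁻¹)(δ_j + δ_{-j}))`. -/
def phiOf (ψ : ℝ → LinfN) (ω : ℝ) : ℤ → ℝ :=
  fun x => ω ^ ((1 : ℝ) / 6) *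
    (if x = 0 then 1 + ω⁻¹ * ψ ω⁻¹ 0
     else ω ^ (-(x.natAbs : ℝ)) * ψ ω⁻¹ x.natAbs)

/-! The root `z` of `z + z⁻¹ = 2 - λ` with `|z| < 1` exists because `λ ∉ ℝ`, and turns
`(-Δ_d - λ) v = u` into `v(x+1) + v(x-1) = (z + z⁻¹) v(x) - u(x)`. This factors as a first-order
recurrence for `w(x) = v(x+1) - z v(x)`, whose only bounded solution is
`w(x) = ∑_{k ≥ 0} z^{k+1} u(x+k+1)`; hence `|w| ≤ ‖u‖_{l¹}` uniformly in `λ`. For odd `u` the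
same formula run in both directions forces `v(0) = 0`, so `|v(x)| ≤ ‖u‖_{l¹} |x|`, a growth that
the weight `e^{-|x|}` absorbs. -/

section Recurrence

variable {𝕜 : Type*} [NormedField 𝕜] {z : 𝕜} {v w u : ℤ → 𝕜} {B S : ℝ}

lemma norm_mul_le_of_norm_le_one (hz : ‖z‖ ≤ 1) (a : 𝕜) : ‖z * a‖ ≤ ‖a‖ := by
  rw [norm_mul]
  exact mul_le_of_le_one_left (norm_nonneg _) hz

lemma norm_pow_mul_le_of_norm_le_one (hz : ‖z‖ ≤ 1) (n : ℕ) (a : 𝕜) : ‖z ^ n * a‖ ≤ ‖a‖ :=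
  norm_mul_le_of_norm_le_one (by rw [norm_pow]; exact pow_le_one₀ (norm_nonneg _) hz) a

lemma summable_norm_pow_succ_mul_comp (hz : ‖z‖ ≤ 1) (hu : Summable fun y => ‖u y‖)
    {i : ℕ → ℤ} (hi : Function.Injective i) :
    Summable fun k : ℕ => ‖z ^ (k + 1) * u (i k)‖ :=
  (hu.comp_injective hi).of_nonneg_of_le (fun _ => norm_nonneg _) fun _ =>
    norm_pow_mul_le_of_norm_le_one hz _ _

lemma norm_le_tsum_norm_of_hasSum_pow_succ_mul (hz : ‖z‖ ≤ 1) (hu : Summable fun y => ‖u y‖)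
    {i : ℕ → ℤ} (hi : Function.Injective i) {a : 𝕜}
    (ha : HasSum (fun k : ℕ => z ^ (k + 1) * u (i k)) a) : ‖a‖ ≤ ∑' y, ‖u y‖ := by
  have hsum := summable_norm_pow_succ_mul_comp hz hu hi
  rw [← ha.tsum_eq]
  calc _ ≤ ∑' k : ℕ, ‖z ^ (k + 1) * u (i k)‖ := norm_tsum_le_tsum_norm hsum
    _ ≤ ∑' y, ‖u y‖ := hsum.tsum_le_tsum_of_inj i hi (fun _ _ => norm_nonneg _)
        (fun _ => norm_pow_mul_le_of_norm_le_one hz _ _) hu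

lemma hasSum_pow_succ_mul_of_eq_mul_add [CompleteSpace 𝕜] (hz : ‖z‖ < 1)
    (hw : ∀ x, ‖w x‖ ≤ B) (hu : Summable fun y => ‖u y‖)
    (hrec : ∀ x, w x = z * (w (x + 1) + u (x + 1))) (x : ℤ) :
    HasSum (fun k : ℕ => z ^ (k + 1) * u (x + k + 1)) (w x) := by
  have hinj : Function.Injective fun k : ℕ => x + k + 1 := fun a b h => by simpa using h
  have hsum := (summable_norm_pow_succ_mul_comp hz.le hu hinj).of_norm
  have hpartial : ∀ n : ℕ, w x = z ^ n * w (x + n)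
      + ∑ k ∈ Finset.range n, z ^ (k + 1) * u (x + k + 1) := by
    intro n
    induction n with
    | zero => simp
    | succ n ih =>
      rw [ih, Finset.sum_range_succ, hrec (x + n)]
      push_cast
      ring_nf
  have htail : Tendsto (fun n : ℕ => z ^ n * w (x + n)) atTop (nhds 0) := by
    refine squeeze_zero_norm (fun n => ?_) (by
      simpa using (tendsto_pow_atTop_nhds_zero_of_lt_one (norm_nonneg z) hz).mul_const B)
    rw [norm_mul, norm_pow]
    exact mul_le_mul_of_nonneg_left (hw _) (by positivity)
  rw [hsum.hasSum_iff_tendsto_nat]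
  have := tendsto_const_nhds (x := w x) |>.sub htail
  simp only [sub_zero] at this
  refine this.congr fun n => ?_
  rw [hpartial n]
  ring

lemma eq_mul_add_of_add_eq (hz : z ≠ 0)
    (hrec : ∀ x, v (x + 1) + v (x - 1) = (z + z⁻¹) * v x - u x) (x : ℤ) :
    v (x + 1) - z * v x = z * (v (x + 1 + 1) - z * v (x + 1) + u (x + 1)) := by
  have h := hrec (x + 1)
  rw [add_sub_cancel_right] at h
  linear_combination (-z) * h - v (x + 1) * mul_inv_cancel₀ hz

lemma add_eq_of_add_eq_comp_neg (hrec : ∀ x, v (x + 1) + v (x - 1) = (z + z⁻¹) * v x - u x)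
    (x : ℤ) : v (-(x + 1)) + v (-(x - 1)) = (z + z⁻¹) * v (-x) - u (-x) := by
  rw [← hrec (-x), neg_add', neg_sub', sub_neg_eq_add, add_comm]

lemma norm_le_mul_of_norm_sub_mul_le (hz : ‖z‖ ≤ 1) {g : ℕ → 𝕜} (h0 : g 0 = 0)
    (hstep : ∀ n, ‖g (n + 1) - z * g n‖ ≤ S) (n : ℕ) : ‖g n‖ ≤ S * n := by
  induction n with
  | zero => simp [h0]
  | succ n ih =>
    calc ‖g (n + 1)‖ ≤ ‖z * g n‖ + ‖g (n + 1) - z * g n‖ := norm_le_insert' _ _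
      _ ≤ ‖g n‖ + S := add_le_add (norm_mul_le_of_norm_le_one hz _) (hstep n)
      _ ≤ S * (n + 1 : ℕ) := by push_cast; linarith

lemma apply_zero_eq_zero_of_odd [CharZero 𝕜] (hz0 : z ≠ 0) (hz : ‖z‖ < 1)
    (hodd : ∀ x, u (-x) = -u x)
    (hrec : ∀ x, v (x + 1) + v (x - 1) = (z + z⁻¹) * v x - u x)
    (hsym : -(v 1 - z * v 0) = v (-1) - z * v 0) : v 0 = 0 := by
  have hu0 : u 0 = 0 := self_eq_neg.mp (by simpa using hodd 0)
  have hrec0 := hrec 0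
  simp only [zero_add, zero_sub] at hrec0
  have hz2 : 1 - z ^ 2 ≠ 0 := sub_ne_zero.2 fun h => by
    have := pow_lt_one₀ (norm_nonneg z) hz two_ne_zero
    rw [← norm_pow, ← h, norm_one] at this
    exact this.false
  refine (mul_eq_zero.1 ?_).resolve_left hz2
  linear_combination -z * hrec0 - z * hsym + z * hu0 - v 0 * mul_inv_cancel₀ hz0

lemma norm_le_tsum_norm_mul_abs_of_odd [CompleteSpace 𝕜] [CharZero 𝕜] (hz0 : z ≠ 0)
    (hz : ‖z‖ < 1) (hv : ∀ x, ‖v x‖ ≤ B) (hu : Summable fun y => ‖u y‖)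
    (hodd : ∀ x, u (-x) = -u x)
    (hrec : ∀ x, v (x + 1) + v (x - 1) = (z + z⁻¹) * v x - u x) (x : ℤ) :
    ‖v x‖ ≤ (∑' y, ‖u y‖) * |(x : ℝ)| := by
  have hbdd (f : ℤ → 𝕜) (hf : ∀ x, ‖f x‖ ≤ B) (x : ℤ) : ‖f (x + 1) - z * f x‖ ≤ B + B :=
    (norm_sub_le _ _).trans (add_le_add (hf _) ((norm_mul_le_of_norm_le_one hz.le _).trans (hf _)))
  have hfwd := hasSum_pow_succ_mul_of_eq_mul_add hz (hbdd v hv) hu (eq_mul_add_of_add_eq hz0 hrec)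
  have hbwd := hasSum_pow_succ_mul_of_eq_mul_add hz (hbdd _ fun x => hv (-x))
    (hu.comp_injective neg_injective)
    (eq_mul_add_of_add_eq (v := fun y => v (-y)) (u := fun y => u (-y)) hz0
      (add_eq_of_add_eq_comp_neg hrec))
  -- at `x = 0` the two series differ only by the sign of `u`
  have h0 : v 0 = 0 := apply_zero_eq_zero_of_odd hz0 hz hodd hrec <| by
    simpa using (hfwd 0).neg.unique ((hbwd 0).congr_fun fun k => by rw [hodd, mul_neg])
  have hinj (x : ℤ) (s : ℤ) (hs : s ≠ 0) : Function.Injective fun k : ℕ => s * (x + k + 1) :=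
    fun a b h => by simpa [hs] using h
  obtain ⟨n, rfl | rfl⟩ := Int.eq_nat_or_neg x
  · have := norm_le_mul_of_norm_sub_mul_le hz.le (g := fun n : ℕ => v n) h0 (fun n => by
      simpa using norm_le_tsum_norm_of_hasSum_pow_succ_mul hz.le hu (hinj n 1 one_ne_zero)
        (by simpa using hfwd n)) n
    simpa using this
  · have := norm_le_mul_of_norm_sub_mul_le hz.le (g := fun n : ℕ => v (-n)) (by simpa using h0)
      (fun n => by
        simpa using norm_le_tsum_norm_of_hasSum_pow_succ_mul hz.le hu (hinj n (-1) (by norm_num))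
          (by simpa using hbwd n)) n
    simpa using this

end Recurrence

lemma Complex.exists_norm_lt_one_add_inv_eq {c : ℂ} (hc : c.im ≠ 0) :
    ∃ z : ℂ, z ≠ 0 ∧ ‖z‖ < 1 ∧ z + z⁻¹ = c := by
  obtain ⟨z, hz⟩ := exists_quadratic_eq_zero (a := (1 : ℂ)) (b := -c) (c := 1) one_ne_zero
    (IsAlgClosed.exists_eq_mul_self _)
  have hz0 : z ≠ 0 := by rintro rfl; simp at hz
  have hzc : z + z⁻¹ = c := by field_simp; linear_combination hz
  rcases lt_trichotomy ‖z‖ 1 with hlt | heq | hgt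
  · exact ⟨z, hz0, hlt, hzc⟩
  · -- on the unit circle `z⁻¹ = conj z`, which would make `c` real
    rw [Complex.inv_eq_conj heq] at hzc
    exact absurd (by simp [← hzc]) hc
  · refine ⟨z⁻¹, inv_ne_zero hz0, ?_, by rw [inv_inv, add_comm, hzc]⟩
    rw [norm_inv]; exact inv_lt_one_of_one_lt₀ hgt

lemma wt_pos (a : ℝ) (x : ℤ) : 0 < wt a x := Real.exp_pos _

lemma ofReal_norm_mul_wt_le_el2w (a : ℝ) (u : ℤ → ℂ) (x : ℤ) :
    ENNReal.ofReal (‖u x‖ * wt a x) ≤ el2w a u := by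
  rw [ENNReal.ofReal_mul (norm_nonneg _), ofReal_norm, el2w, one_div,
    ← ENNReal.pow_rpow_inv_natCast two_ne_zero (‖u x‖ₑ * _)]
  exact ENNReal.rpow_le_rpow (ENNReal.le_tsum (f := fun y => (‖u y‖ₑ * _) ^ 2) x)
    (by norm_num)

lemma norm_le_wt_neg_of_el2w_le_one {a : ℝ} {u : ℤ → ℂ} (hu : el2w a u ≤ 1) (x : ℤ) :
    ‖u x‖ ≤ wt (-a) x := by
  have h := ENNReal.ofReal_le_one.1 ((ofReal_norm_mul_wt_le_el2w a u x).trans hu)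
  have hwt : wt (-a) x = 1 / wt a x := by rw [wt, wt, neg_mul, Real.exp_neg, one_div]
  rwa [hwt, le_div_iff₀ (wt_pos a x)]

lemma el2w_le_ofReal_sqrt_of_norm_le {a : ℝ} {v : ℤ → ℂ} {g : ℤ → ℝ} (hv : ∀ x, ‖v x‖ ≤ g x)
    (hg : Summable fun x => (g x * wt a x) ^ 2) :
    el2w a v ≤ ENNReal.ofReal √(∑' x, (g x * wt a x) ^ 2) := by
  have hterm (x : ℤ) : (‖v x‖ₑ * ENNReal.ofReal (wt a x)) ^ 2
      ≤ ENNReal.ofReal ((g x * wt a x) ^ 2) := by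
    rw [← ofReal_norm, ← ENNReal.ofReal_mul (norm_nonneg _), ← ENNReal.ofReal_pow
      (mul_nonneg (norm_nonneg _) (wt_pos a x).le)]
    exact ENNReal.ofReal_le_ofReal (pow_le_pow_left₀ (mul_nonneg (norm_nonneg _) (wt_pos a x).le)
      (mul_le_mul_of_nonneg_right (hv x) (wt_pos a x).le) 2)
  rw [el2w, Real.sqrt_eq_rpow, ← ENNReal.ofReal_rpow_of_nonneg (tsum_nonneg fun _ => sq_nonneg _)
    (by norm_num), ENNReal.ofReal_tsum_of_nonneg (fun _ => sq_nonneg _) hg]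
  exact ENNReal.rpow_le_rpow (ENNReal.tsum_le_tsum hterm) (by norm_num)

lemma summable_int_comp_abs {f : ℝ → ℝ} (hf : Summable fun n : ℕ => f n) :
    Summable fun x : ℤ => f |(x : ℝ)| :=
  Summable.of_nat_of_neg (by simpa using hf) (by simpa using hf)

lemma summable_wt_neg {a : ℝ} (ha : 0 < a) : Summable (wt (-a)) :=
  summable_int_comp_abs (f := fun t => Real.exp (-a * t)) <| by
    simpa only [mul_comm (-a)] using Real.summable_exp_nat_mul_iff.2 (neg_neg_of_pos ha)

lemma summable_sq_mul_abs_mul_wt_neg {a : ℝ} (ha : 0 < a) (c : ℝ) :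
    Summable fun x : ℤ => (c * |(x : ℝ)| * wt (-a) x) ^ 2 := by
  refine summable_int_comp_abs (f := fun t => (c * t * Real.exp (-a * t)) ^ 2) ?_
  have hr : ‖Real.exp (-(2 * a))‖ < 1 := by
    rw [Real.norm_eq_abs, abs_of_pos (Real.exp_pos _), Real.exp_lt_one_iff]; linarith
  refine ((summable_pow_mul_geometric_of_norm_lt_one 2 hr).mul_left (c ^ 2)).congr fun n => ?_
  rw [← Real.exp_nat_mul, mul_pow, mul_pow, ← Real.exp_nat_mul]
  ring_nf

/-- **Uniform weighted resolvent bound on odd functions**: for `Im λ ≠ 0` and odd `u`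
with `‖u‖_{l²_1} ≤ 1`, the solution `v` of `(-Δ_d - λ)v = u` satisfies
`‖v‖_{l²_{-1}} ≤ K`, with `K` independent of `λ` and `u`. -/
theorem resolvent_bound_odd :
    ∃ K : ℝ, 0 < K ∧ ∀ lam : ℂ, lam.im ≠ 0 →
      ∀ u v : L2,
        (∀ x : ℤ, u (-x) = -u x) →
        el2w 1 (fun x => u x) ≤ 1 →
        (∀ x : ℤ, -(DeltaD v) x - lam * v x = u x) →
        el2w (-1) (fun x => v x) ≤ ENNReal.ofReal K := by
  set S := ∑' x : ℤ, wt (-1) x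
  set C := √(∑' x : ℤ, (S * |(x : ℝ)| * wt (-1) x) ^ 2)
  refine ⟨C + 1, by positivity, fun lam hlam u v hodd hu heq => ?_⟩
  obtain ⟨z, hz0, hz, hzlam⟩ := Complex.exists_norm_lt_one_add_inv_eq (c := 2 - lam) (by simpa)
  have hrec (x : ℤ) : v (x + 1) + v (x - 1) = (z + z⁻¹) * v x - u x := by
    rw [hzlam, ← heq x, DeltaD_apply]
    ring
  have hu_le := norm_le_wt_neg_of_el2w_le_one hu
  have hu_sum : Summable fun x => ‖u x‖ :=
    (summable_wt_neg one_pos).of_nonneg_of_le (fun _ => norm_nonneg _) hu_le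
  have hv_le (x : ℤ) : ‖v x‖ ≤ S * |(x : ℝ)| :=
    (norm_le_tsum_norm_mul_abs_of_odd hz0 hz (lp.norm_apply_le_norm two_ne_zero v) hu_sum hodd
      hrec x).trans (mul_le_mul_of_nonneg_right
        (hu_sum.tsum_le_tsum hu_le (summable_wt_neg one_pos)) (abs_nonneg _))
  calc el2w (-1) (fun x => v x) ≤ ENNReal.ofReal C :=
        el2w_le_ofReal_sqrt_of_norm_le hv_le (summable_sq_mul_abs_mul_wt_neg one_pos S)
    _ ≤ ENNReal.ofReal (C + 1) := ENNReal.ofReal_le_ofReal (by linarith)
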